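/- arXiv:2112.14178 — 4 statements merged into one kernel-verified Lean document; each statement's English description precedes it below -/
import Mathlib

section
/- The function f(h₀) = ∫_{B_{h₀}} (h₀ - h(x)) dx / h₀ is nonpositive on [h_min, h_max], satisfies f(h_max) = 0, and is strictly monotone increasing with derivative f'(h₀) = ∫_{B_{h₀}} h(x) dx / h₀², where B_{h₀} = {x ∈ [-1,1] : h(x) > h₀}. -/
/-!
Write `B_t = {h > t}` and `N(t) = ∫_{B_t} (t - h) = ∫ min (t - h) 0`. The integrand is
`1`-Lipschitz in `t` with derivative `1_{B_t}` off the level set `{h = t}`, which is null, so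
`N' (t) = |B_t|` by differentiation under the integral sign. Hence
`f' (t) = (t |B_t| - N(t)) / t² = ∫_{B_t} h / t²`, which is positive for `t < h_max` because
`B_t` is then a nonempty relatively open subset of `[-1, 1]`. Nonpositivity is `N ≤ 0`, and
`B_{h_max} = ∅`.
-/

open MeasureTheory Real Set

section LevelSets

open Filter

variable {α : Type*} [MeasurableSpace α] {μ : Measure α} {h : α → ℝ}

lemma setIntegral_sep_eq_restrict {s : Set α} (hs : MeasurableSet s) (p : α → Prop)
    (g : α → ℝ) :
    ∫ x in {x ∈ s | p x}, g x ∂μ = ∫ x in {x | p x}, g x ∂(μ.restrict s) := by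
  rw [Measure.restrict_restrict' hs]
  congr 2 with x
  exact and_comm

lemma restrict_apply_setOf {s : Set α} (hs : MeasurableSet s) (p : α → Prop) :
    μ.restrict s {x | p x} = μ {x ∈ s | p x} := by
  rw [Measure.restrict_apply' hs]
  congr 1 with x
  exact and_comm

lemma setIntegral_sub_lt_eq_integral_min (hh : AEMeasurable h μ) (t : ℝ) :
    ∫ x in {x | t < h x}, (t - h x) ∂μ = ∫ x, min (t - h x) 0 ∂μ := by
  rw [← integral_indicator₀ (nullMeasurableSet_lt aemeasurable_const hh)]
  congr 1 with x
  by_cases hx : t < h x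
  · simp [hx, (sub_neg.2 hx).le]
  · simp [hx, not_lt.1 hx]

lemma setIntegral_sub_lt_nonpos (hh : AEMeasurable h μ) (t : ℝ) :
    ∫ x in {x | t < h x}, (t - h x) ∂μ ≤ 0 := by
  rw [setIntegral_sub_lt_eq_integral_min hh]
  exact integral_nonpos fun x => min_le_right _ _

lemma setIntegral_lt_eq_mul_sub [IsFiniteMeasure μ] (hh : Integrable h μ) (t : ℝ) :
    ∫ x in {x | t < h x}, h x ∂μ
      = t * μ.real {x | t < h x} - ∫ x in {x | t < h x}, (t - h x) ∂μ := by
  rw [integral_sub (integrable_const t) hh.integrableOn, setIntegral_const, smul_eq_mul]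
  ring

lemma setIntegral_lt_pos [IsFiniteMeasure μ] (hh : Integrable h μ) {t : ℝ} (ht : 0 < t)
    (hB : 0 < μ.real {x | t < h x}) : 0 < ∫ x in {x | t < h x}, h x ∂μ := by
  rw [setIntegral_lt_eq_mul_sub hh]
  nlinarith [setIntegral_sub_lt_nonpos hh.aemeasurable t (μ := μ)]

lemma hasDerivAt_min_sub_zero {a t : ℝ} (hta : t ≠ a) :
    HasDerivAt (fun s => min (s - a) 0) (if t < a then 1 else 0) t := by
  rcases hta.lt_or_gt with hlt | hgt
  · rw [if_pos hlt]
    refine ((hasDerivAt_id t).sub_const a).congr_of_eventuallyEq ?_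
    filter_upwards [Iio_mem_nhds hlt] with s hs
    exact min_eq_left (by simp only [mem_Iio] at hs; linarith)
  · rw [if_neg hgt.not_gt]
    refine (hasDerivAt_const t 0).congr_of_eventuallyEq ?_
    filter_upwards [Ioi_mem_nhds hgt] with s hs
    exact min_eq_right (by simp only [mem_Ioi] at hs; linarith)

lemma lipschitzWith_min_sub_zero (a : ℝ) : LipschitzWith 1 fun s : ℝ => min (s - a) 0 :=
  LipschitzWith.of_dist_le_mul fun x y => by
    simpa [Real.dist_eq] using abs_min_sub_min_le_max (x - a) 0 (y - a) 0

lemma hasDerivAt_setIntegral_sub_lt [IsFiniteMeasure μ] (hh : Integrable h μ) {t : ℝ}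
    (hlevel : μ {x | h x = t} = 0) :
    HasDerivAt (fun s => ∫ x in {x | s < h x}, (s - h x) ∂μ) (μ.real {x | t < h x}) t := by
  have hB := nullMeasurableSet_lt aemeasurable_const hh.aemeasurable (μ := μ) (f := fun _ => t)
  have hint : ∀ s, Integrable (fun x => min (s - h x) 0) μ := fun s =>
    ((integrable_const s).sub hh).inf (integrable_zero _ _ μ)
  have hdiff : ∀ᵐ x ∂μ, HasDerivAt (fun s => min (s - h x) 0)
      ({x | t < h x}.indicator 1 x) t := by
    filter_upwards [(ae_iff (p := fun x => h x ≠ t)).2 (by simpa using hlevel)] with x hx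
    simpa [indicator_apply] using hasDerivAt_min_sub_zero (Ne.symm hx)
  have key := hasDerivAt_integral_of_dominated_loc_of_lip (bound := fun _ => (1 : ℝ))
    (F' := {x | t < h x}.indicator 1)
    univ_mem (Eventually.of_forall fun s => (hint s).aestronglyMeasurable) (hint t)
    (aestronglyMeasurable_const.indicator₀ hB)
    (ae_of_all _ fun x => by simpa using lipschitzWith_min_sub_zero (h x))
    (integrable_const _) hdiff
  simp only [funext (setIntegral_sub_lt_eq_integral_min hh.aemeasurable)]
  rw [integral_indicator₀ hB, Pi.one_def, setIntegral_const, smul_eq_mul, mul_one] at key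
  exact key.2

lemma hasDerivAt_setIntegral_sub_lt_div [IsFiniteMeasure μ] (hh : Integrable h μ) {t : ℝ}
    (hlevel : μ {x | h x = t} = 0) (ht : t ≠ 0) :
    HasDerivAt (fun s => (∫ x in {x | s < h x}, (s - h x) ∂μ) / s)
      ((∫ x in {x | t < h x}, h x ∂μ) / t ^ 2) t := by
  refine ((hasDerivAt_setIntegral_sub_lt hh hlevel).div (hasDerivAt_id t) ht).congr_deriv ?_
  rw [setIntegral_lt_eq_mul_sub hh t, id]
  ring

end LevelSets

lemma volume_sep_pos_of_continuousOn_Icc {f : ℝ → ℝ} {a b t x : ℝ} (hab : a < b)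
    (hf : ContinuousOn f (Icc a b)) (hx : x ∈ Icc a b) (htx : t < f x) :
    0 < volume {y ∈ Icc a b | t < f y} := by
  obtain ⟨U, hU, hUeq⟩ := continuousOn_iff'.1 hf (Ioi t) isOpen_Ioi
  have hxU : x ∈ U := (hUeq ▸ ⟨htx, hx⟩ : x ∈ U ∩ Icc a b).1
  have hne : (U ∩ Ioo a b).Nonempty :=
    mem_closure_iff.1 ((closure_Ioo hab.ne).symm ▸ hx) U hU hxU
  calc 0 < volume (U ∩ Ioo a b) := (hU.inter isOpen_Ioo).measure_pos _ hne
    _ ≤ volume {y ∈ Icc a b | t < f y} := measure_mono fun y hy => by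
      have hy' : y ∈ f ⁻¹' Ioi t ∩ Icc a b := hUeq ▸ ⟨hy.1, Ioo_subset_Icc_self hy.2⟩
      exact ⟨hy'.2, hy'.1⟩

/-- properties of `f(h₀) = ∫_{B_{h₀}} (h₀ - h(x)) dx / h₀`, where
`B_{h₀} = {x ∈ [-1,1] : h(x) > h₀}`: nonpositive on `[h_min, h_max]`,
`f(h_max) = 0`, strictly increasing, with derivative `∫_{B_{h₀}} h / h₀²`. -/
theorem stmt_7 (h : ℝ → ℝ) (hcont : ContinuousOn h (Icc (-1) 1))
    (hpos : ∀ x ∈ Icc (-1 : ℝ) 1, 0 < h x)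
    (hlevel : ∀ c : ℝ, volume {x ∈ Icc (-1 : ℝ) 1 | h x = c} = 0) :
    let hmin := sInf (h '' Icc (-1) 1)
    let hmax := sSup (h '' Icc (-1) 1)
    let f : ℝ → ℝ := fun h0 =>
      (∫ x in {x ∈ Icc (-1 : ℝ) 1 | h0 < h x}, (h0 - h x)) / h0
    (∀ h0 ∈ Icc hmin hmax, f h0 ≤ 0) ∧
    f hmax = 0 ∧
    StrictMonoOn f (Icc hmin hmax) ∧
    (∀ h0 ∈ Ioo hmin hmax,
      HasDerivAt f ((∫ x in {x ∈ Icc (-1 : ℝ) 1 | h0 < h x}, h x) / h0 ^ 2) h0) := by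
  intro hmin hmax f
  set μ := volume.restrict (Icc (-1 : ℝ) 1)
  have hint : Integrable h μ := hcont.integrableOn_Icc
  have hf : f = fun s => (∫ x in {x | s < h x}, (s - h x) ∂μ) / s := by
    funext s
    exact congrArg (· / s) (setIntegral_sep_eq_restrict measurableSet_Icc _ _)
  have hcompact : IsCompact (h '' Icc (-1) 1) := isCompact_Icc.image_of_continuousOn hcont
  have hne : (h '' Icc (-1 : ℝ) 1).Nonempty := (nonempty_Icc.2 (by norm_num)).image h
  have hmin_pos : 0 < hmin := forall_mem_image.2 hpos _ (hcompact.sInf_mem hne)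
  have hderiv : ∀ t, 0 < t →
      HasDerivAt f ((∫ x in {x ∈ Icc (-1 : ℝ) 1 | t < h x}, h x) / t ^ 2) t := fun t ht => by
    rw [hf, setIntegral_sep_eq_restrict measurableSet_Icc]
    exact hasDerivAt_setIntegral_sub_lt_div hint
      ((restrict_apply_setOf measurableSet_Icc _).trans (hlevel t)) ht.ne'
  refine ⟨fun t ht => ?_, ?_, ?_, fun t ht => hderiv t (hmin_pos.trans ht.1)⟩
  · rw [hf]
    exact div_nonpos_of_nonpos_of_nonneg (setIntegral_sub_lt_nonpos hint.aemeasurable t)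
      (hmin_pos.le.trans ht.1)
  · have hempty : {x ∈ Icc (-1 : ℝ) 1 | hmax < h x} = ∅ :=
      eq_empty_of_forall_notMem fun x hx =>
        hx.2.not_ge (le_csSup hcompact.bddAbove (mem_image_of_mem h hx.1))
    simp only [f, hempty, Measure.restrict_empty, integral_zero_measure, zero_div]
  · refine strictMonoOn_of_deriv_pos (convex_Icc _ _)
      (fun t ht => (hderiv t (hmin_pos.trans_le ht.1)).continuousAt.continuousWithinAt)
      fun t ht => ?_
    rw [interior_Icc] at ht
    have ht_pos := hmin_pos.trans ht.1
    obtain ⟨_, ⟨x, hx, rfl⟩, htx⟩ := exists_lt_of_lt_csSup hne ht.2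
    have hB : 0 < μ.real {x | t < h x} := by
      refine ENNReal.toReal_pos ?_ (measure_ne_top _ _)
      rw [restrict_apply_setOf measurableSet_Icc]
      exact (volume_sep_pos_of_continuousOn_Icc (by norm_num) hcont hx htx).ne'
    rw [(hderiv t ht_pos).deriv, setIntegral_sep_eq_restrict measurableSet_Icc]
    exact div_pos (setIntegral_lt_pos hint ht_pos hB) (by positivity)
end

section
/- For K = 2, with h(x) = x⃗ Q^{-1} x⃗^T where x⃗ = (1, x, x²) and Q the moment matrix of U[-1,1], the critical variance σ²_min = 2/(∫_{-1}^1 h(x) dx / h_min - 2) equals 3/2. -/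
open MeasureTheory Real Set Matrix

/-!
Inverting `Q` explicitly gives `h(x) = 9/4 - 9/2 x² + 45/4 x⁴ = 9/5 + 45/4 (x² - 1/5)²`, so
`h_min = 9/5`, attained at `x² = 1/5`, and `∫₋₁¹ h = 6` (in general `∫ h = 2 tr(Q⁻¹Q) = 2(K+1)`).
Hence `σ²_min = 2 / (6 / (9/5) - 2) = 3/2`.
-/

/-- Moment matrix of `U[-1,1]` for `K = 2`. -/
noncomputable def Q2 : Matrix (Fin 3) (Fin 3) ℝ :=
  !![1, 0, 1/3; 0, 1/3, 0; 1/3, 0, 1/5]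

/-- `h(x) = x⃗ Q⁻¹ x⃗ᵀ` for `x⃗ = (1, x, x²)`. -/
noncomputable def hfun2 (x : ℝ) : ℝ :=
  ![1, x, x ^ 2] ⬝ᵥ (Q2⁻¹ *ᵥ ![1, x, x ^ 2])

lemma Q2_inv : Q2⁻¹ = !![9/4, 0, -15/4; 0, 3, 0; -15/4, 0, 45/4] := by
  refine Matrix.inv_eq_left_inv ?_
  rw [Q2, Matrix.mul_fin_three, Matrix.one_fin_three]
  norm_num

lemma hfun2_eq (x : ℝ) : hfun2 x = 9/4 - 9/2 * x^2 + 45/4 * x^4 := by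
  simp only [hfun2, Q2_inv, mulVec, vec3_dotProduct, of_apply, cons_val_zero, cons_val_one,
    cons_val_two, head_cons, tail_cons]
  ring

lemma integral_hfun2 : ∫ x in (-1 : ℝ)..1, hfun2 x = 6 := by
  have hint {f : ℝ → ℝ} (hf : Continuous f) : IntervalIntegrable f volume (-1) 1 :=
    hf.intervalIntegrable _ _
  simp only [hfun2_eq]
  rw [intervalIntegral.integral_add (hint (by fun_prop)) (hint (by fun_prop)),
    intervalIntegral.integral_sub (hint (by fun_prop)) (hint (by fun_prop))]
  norm_num [integral_pow]

lemma isLeast_hfun2 : IsLeast (hfun2 '' Icc (-1) 1) (9/5) := by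
  have h_sq (x : ℝ) : hfun2 x = 9/5 + 45/4 * (x^2 - 1/5)^2 := by rw [hfun2_eq]; ring
  refine ⟨⟨√(1/5), ⟨?_, ?_⟩, by simp [h_sq]⟩, ?_⟩
  · linarith [Real.sqrt_nonneg (1/5 : ℝ)]
  · exact Real.sqrt_le_one.mpr (by norm_num)
  · rintro _ ⟨x, -, rfl⟩
    rw [h_sq]
    exact le_add_of_nonneg_right (by positivity)

/-- for `K = 2`, the critical variance
`σ²_min = 2/(∫ h / h_min - 2)` equals `3/2`. -/
theorem stmt_12 :
    let hmin := sInf (hfun2 '' Icc (-1) 1)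
    2 / ((∫ x in (-1 : ℝ)..1, hfun2 x) / hmin - 2) = 3 / 2 := by
  intro hmin
  rw [show hmin = 9/5 from isLeast_hfun2.csInf_eq, integral_hfun2]
  norm_num
end

section
/- Phase transition, low-variance case: if σ² ≤ σ²_min = -2/f(h_min), then π*(x) = h(x)/∫_{-1}^1 h(t) dt minimizes R_π = (σ²/2) ∫_{-1}^1 h(x)/π(x) dx + sup_{x∈[-1,1]} h(x)/π(x) over all densities π on [-1,1] with π > 0. -/
open MeasureTheory Real Set

/-!
Write `I = ∫ h`, `J = ∫ h/π` and `M = sup h/π`, so that `R_{π*} = (1 + σ²) I`. Since `h ≥ h_min`,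
`f(h_min) = (2 h_min - I) / h_min`, and the hypothesis on `σ²` becomes `σ² I ≤ 2 (1 + σ²) h_min`,
i.e. `(1 + σ²) h - σ² I / 2 ≥ 0` on `[-1, 1]`. Integrating `(M - h/π) ((1 + σ²) h - σ² I / 2) ≥ 0`
gives `(1 + σ²) ∫ h²/π ≤ I (M + σ² J / 2)`, and Cauchy–Schwarz with `∫ π = 1` gives
`I² ≤ ∫ h²/π`; dividing by `I` yields `(1 + σ²) I ≤ R_π`.
-/

theorem sInf_image_pos_of_continuousOn {X : Type*} [TopologicalSpace X] {h : X → ℝ}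
    {K : Set X} (hK : IsCompact K) (hne : K.Nonempty) (hh : ContinuousOn h K)
    (hpos : ∀ x ∈ K, 0 < h x) : 0 < sInf (h '' K) := by
  obtain ⟨x, hx, hx_eq⟩ := (hK.image_of_continuousOn hh).sInf_mem (hne.image h)
  exact hx_eq ▸ hpos x hx

theorem setIntegral_sep_lt_sub_eq_of_le {α : Type*} [MeasurableSpace α] {μ : Measure α}
    {s : Set α} (hs : MeasurableSet s) {g : α → ℝ} {m : ℝ} (hm : ∀ x ∈ s, m ≤ g x) :
    ∫ x in {x ∈ s | m < g x}, (m - g x) ∂μ = ∫ x in s, (m - g x) ∂μ := by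
  refine (setIntegral_eq_of_subset_of_forall_sdiff_eq_zero hs (sep_subset _ _) ?_).symm
  rintro x ⟨hxs, hx⟩
  have hgm : g x ≤ m := not_lt.1 fun hlt => hx ⟨hxs, hlt⟩
  linarith [hm x hxs]

theorem mul_le_two_mul_one_add_of_le_neg_two_div {m I s : ℝ} (hm : 0 < m) (hs : 0 ≤ s)
    (hsI : s ≤ -2 / ((2 * m - I) / m)) : s * I ≤ 2 * m * (1 + s) := by
  rcases le_or_gt I (2 * m) with hI | hI
  · nlinarith
  · have : -2 / ((2 * m - I) / m) = 2 * m / (I - 2 * m) := by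
      rw [div_div_eq_mul_div, ← neg_sub, div_neg, neg_mul, neg_div, neg_neg]
    rw [this, le_div_iff₀ (by linarith)] at hsI
    linarith

section Interval

variable {a b : ℝ}

theorem intervalIntegrable_of_intervalIntegral_eq_one {p : ℝ → ℝ}
    (hp1 : ∫ x in a..b, p x = 1) : IntervalIntegrable p volume a b := by
  by_contra hni
  rw [intervalIntegral.integral_undef hni] at hp1
  exact zero_ne_one hp1

theorem sq_intervalIntegral_le_integral_sq_div {u p : ℝ → ℝ} (hab : a ≤ b)
    (hp : ∀ x ∈ Icc a b, 0 < p x) (hp1 : ∫ x in a..b, p x = 1)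
    (hu : IntervalIntegrable u volume a b)
    (hup : IntervalIntegrable (fun x => u x ^ 2 / p x) volume a b) :
    (∫ x in a..b, u x) ^ 2 ≤ ∫ x in a..b, u x ^ 2 / p x := by
  set I := ∫ x in a..b, u x
  have hpi := intervalIntegrable_of_intervalIntegral_eq_one hp1
  have hpt : ∀ x ∈ Icc a b, 2 * I * u x ≤ u x ^ 2 / p x + I ^ 2 * p x := by
    intro x hx
    have hpx := hp x hx
    rw [div_add' _ _ _ hpx.ne', le_div_iff₀ hpx]
    nlinarith [sq_nonneg (u x - I * p x)]
  have hint := intervalIntegral.integral_mono_on hab (hu.const_mul (2 * I))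
    (hup.add (hpi.const_mul (I ^ 2))) hpt
  rw [intervalIntegral.integral_const_mul, intervalIntegral.integral_add hup (hpi.const_mul _),
    intervalIntegral.integral_const_mul, hp1] at hint
  nlinarith

theorem intervalIntegral_sep_lt_sub_eq (hab : a ≤ b) {h : ℝ → ℝ} {m : ℝ}
    (hh : ContinuousOn h (Icc a b)) (hm : ∀ x ∈ Icc a b, m ≤ h x) :
    ∫ x in {x ∈ Icc a b | m < h x}, (m - h x) = m * (b - a) - ∫ x in a..b, h x := by
  rw [setIntegral_sep_lt_sub_eq_of_le measurableSet_Icc hm,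
    integral_sub (integrable_const m) hh.integrableOn_Icc, setIntegral_const,
    Real.volume_real_Icc_of_le hab, intervalIntegral.integral_of_le hab,
    integral_Icc_eq_integral_Ioc, smul_eq_mul, mul_comm]

theorem one_add_mul_intervalIntegral_le {h p : ℝ → ℝ} {σ2 M : ℝ} (hab : a < b) (hσ2 : 0 ≤ σ2)
    (hh : ContinuousOn h (Icc a b)) (hI : 0 < ∫ x in a..b, h x)
    (hp : ∀ x ∈ Icc a b, 0 < p x) (hp1 : ∫ x in a..b, p x = 1)
    (hhp : IntervalIntegrable (fun x => h x / p x) volume a b)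
    (hM : ∀ x ∈ Icc a b, h x / p x ≤ M)
    (hw : ∀ x ∈ Icc a b, σ2 * (∫ t in a..b, h t) ≤ (b - a) * (1 + σ2) * h x) :
    (1 + σ2) * (∫ x in a..b, h x) ≤ σ2 / (b - a) * (∫ x in a..b, h x / p x) + M := by
  have hL : 0 < b - a := sub_pos.2 hab
  have hhi : IntervalIntegrable h volume a b := hh.intervalIntegrable_of_Icc hab.le
  have hsq : IntervalIntegrable (fun x => h x ^ 2 / p x) volume a b := by
    simpa only [sq, mul_div_assoc] using hhp.continuousOn_mul (uIcc_of_le hab.le ▸ hh)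
  have hcs := sq_intervalIntegral_le_integral_sq_div hab.le hp hp1 hhi hsq
  set I := ∫ x in a..b, h x
  set J := ∫ x in a..b, h x / p x
  set c := σ2 * I / (b - a) with hc
  have hpt : ∀ x ∈ Icc a b,
      (1 + σ2) * (h x ^ 2 / p x) + c * M ≤ (1 + σ2) * M * h x + c * (h x / p x) := by
    intro x hx
    have hcx : c ≤ (1 + σ2) * h x := by
      rw [hc, div_le_iff₀ hL]
      linarith [hw x hx]
    have hsq_eq : h x ^ 2 / p x = h x * (h x / p x) := by ring
    rw [hsq_eq]
    nlinarith [mul_nonneg (sub_nonneg.2 (hM x hx)) (sub_nonneg.2 hcx)]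
  have hint := intervalIntegral.integral_mono_on hab.le
    ((hsq.const_mul _).add intervalIntegrable_const) ((hhi.const_mul _).add (hhp.const_mul c)) hpt
  rw [intervalIntegral.integral_add (hsq.const_mul _) intervalIntegrable_const,
    intervalIntegral.integral_add (hhi.const_mul _) (hhp.const_mul c),
    intervalIntegral.integral_const_mul, intervalIntegral.integral_const_mul,
    intervalIntegral.integral_const_mul, intervalIntegral.integral_const_mul,
    intervalIntegral.integral_const, smul_eq_mul] at hint
  have hcL : c * ((b - a) * M) = σ2 * I * M := by
    rw [hc]
    field_simp
  have hcJ : I * (σ2 / (b - a) * J + M) = c * J + M * I := by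
    rw [hc]
    ring
  refine le_of_mul_le_mul_left ?_ hI
  rw [hcJ]
  nlinarith [mul_le_mul_of_nonneg_left hcs (by linarith : (0 : ℝ) ≤ 1 + σ2)]

end Interval

/-- Theorem 2(i): if `σ² ≤ σ²_min = -2/f(h_min)`, then
`p*(x) = h(x)/∫h` minimizes `R_p = (σ²/2) ∫ h/p + sup_{x∈[-1,1]} h(x)/p(x)` over
densities `p > 0` on `[-1,1]`. -/
theorem stmt_14 (h : ℝ → ℝ) (hcont : ContinuousOn h (Icc (-1) 1))
    (hpos : ∀ x ∈ Icc (-1 : ℝ) 1, 0 < h x)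
    (σ2 : ℝ) (hσ2 : 0 ≤ σ2) :
    let hmin := sInf (h '' Icc (-1) 1)
    let f : ℝ → ℝ := fun h0 =>
      (∫ x in {x ∈ Icc (-1 : ℝ) 1 | h0 < h x}, (h0 - h x)) / h0
    let R : (ℝ → ℝ) → ℝ := fun p =>
      (σ2 / 2) * (∫ x in (-1 : ℝ)..1, h x / p x)
        + sSup ((fun x => h x / p x) '' Icc (-1) 1)
    let pstar : ℝ → ℝ := fun x => h x / ∫ t in (-1 : ℝ)..1, h t
    σ2 ≤ (-2 : ℝ) / f hmin →
      ∀ p : ℝ → ℝ, Measurable p → (∀ x ∈ Icc (-1 : ℝ) 1, 0 < p x) →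
        (∫ x in (-1 : ℝ)..1, p x) = 1 →
        IntervalIntegrable (fun x => h x / p x) volume (-1) 1 →
        BddAbove ((fun x => h x / p x) '' Icc (-1) 1) →
        R pstar ≤ R p := by
  intro hmin f R pstar hσ p _ hp hp1 hhp hbdd
  set I := ∫ t in (-1 : ℝ)..1, h t with hI_def
  have hI : 0 < I := intervalIntegral.intervalIntegral_pos_of_pos_on
    (hcont.intervalIntegrable_of_Icc (by norm_num))
    (fun x hx => hpos x (Ioo_subset_Icc_self hx)) (by norm_num)
  have hmin_pos : 0 < hmin :=
    sInf_image_pos_of_continuousOn isCompact_Icc ⟨0, by norm_num⟩ hcont hpos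
  have hmin_le : ∀ x ∈ Icc (-1 : ℝ) 1, hmin ≤ h x := fun x hx =>
    csInf_le (isCompact_Icc.image_of_continuousOn hcont).bddBelow (mem_image_of_mem h hx)
  have hf : f hmin = (2 * hmin - I) / hmin := by
    simp only [f]
    rw [intervalIntegral_sep_lt_sub_eq (by norm_num) hcont hmin_le, ← hI_def]
    ring
  have hw : ∀ x ∈ Icc (-1 : ℝ) 1, σ2 * I ≤ (1 - -1) * (1 + σ2) * h x := by
    have hσI := mul_le_two_mul_one_add_of_le_neg_two_div hmin_pos hσ2 (hf ▸ hσ)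
    intro x hx
    nlinarith [hmin_le x hx]
  have hRstar : R pstar = (1 + σ2) * I := by
    have hconst : ∀ x ∈ Icc (-1 : ℝ) 1, h x / pstar x = I := fun x hx =>
      div_div_cancel₀ (hpos x hx).ne'
    simp only [R]
    rw [intervalIntegral.integral_congr (g := fun _ => I)
        (fun x hx => hconst x (uIcc_of_le (by norm_num : (-1 : ℝ) ≤ 1) ▸ hx)),
      intervalIntegral.integral_const, image_congr hconst,
      (nonempty_Icc.2 (by norm_num)).image_const, csSup_singleton]
    norm_num
    ring
  have hRp := one_add_mul_intervalIntegral_le (by norm_num) hσ2 hcont hI hp hp1 hhp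
    (fun x hx => le_csSup hbdd (mem_image_of_mem _ hx)) hw
  norm_num at hRp
  exact hRstar.trans_le hRp
end

section
/- For every density π₀ on [-1,1] with π₀ > 0 there exists a density π₀* of the form π₀*(x) = c h₀^{1/2} h^{1/2}(x) on A_{h₀} and π₀*(x) = c h(x) on B_{h₀} (for some h₀ ∈ [h_min, h_max] and normalizing constant c) such that R_{π₀*} ≤ R_{π₀}, where R_π = (σ²/2)∫_{-1}^1 h(x)/π(x) dx + sup_x h(x)/π(x). -/
open MeasureTheory Real Set

/-!
Let `M = sup h / p₀`, so that `h ≤ M p₀` and `∫ h ≤ M`. For a threshold `t` the profile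
`q_t = max (√t √h) h` is `√t √h` on `{h ≤ t}` and `h` on `{h > t}`; its mass `F t` is continuous
in `t` with `F h_min = ∫ h ≤ M`, so the intermediate value theorem yields `t` with `F t ≤ M`,
and `F t = M` unless `t = h_max`. The density `p = q_t / F t` satisfies `h / p ≤ F t ≤ M`,
which controls the sup term. For the integral term, convexity of `p ↦ h / p` gives
`h / p ≤ h / p₀ + κ (p₀ - p)` with `κ = (c² t)⁻¹`, `c = (F t)⁻¹`: on `{h ≤ t}` one has
`h / p² = κ`, while on `{h > t}` both `h / p² ≤ κ` and `p = h / M ≤ p₀`. Integrating, the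
`κ`-term vanishes because `p` and `p₀` both have mass one.
-/

-- Written as a `max` so that continuity in `t` and `s` is immediate.
noncomputable def twoPiece (t s : ℝ) : ℝ := max (√t * √s) s

section twoPiece

variable {t s : ℝ}

theorem twoPiece_of_le (hs : 0 ≤ s) (hst : s ≤ t) : twoPiece t s = √t * √s :=
  max_eq_left <| by
    calc s = √s * √s := (mul_self_sqrt hs).symm
      _ ≤ √t * √s := by gcongr

theorem twoPiece_of_ge (hs : 0 ≤ s) (hts : t ≤ s) : twoPiece t s = s :=
  max_eq_right <| by
    calc √t * √s ≤ √s * √s := by gcongr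
      _ = s := mul_self_sqrt hs

theorem le_twoPiece : s ≤ twoPiece t s := le_max_right _ _

theorem mul_twoPiece_eq_ite (c : ℝ) (hs : 0 ≤ s) :
    c * twoPiece t s = if s ≤ t then c * √t * √s else c * s := by
  split_ifs with hst
  · rw [twoPiece_of_le hs hst, mul_assoc]
  · rw [twoPiece_of_ge hs (not_le.1 hst).le]

theorem div_mul_twoPiece_le_inv {c : ℝ} (hc : 0 < c) (hs : 0 < s) :
    s / (c * twoPiece t s) ≤ c⁻¹ :=
  calc s / (c * twoPiece t s) ≤ s / (c * s) := by
        gcongr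
        exact le_twoPiece
    _ = c⁻¹ := by rw [mul_comm c, ← div_div, div_self hs.ne', one_div]

theorem twoPiece_first_order {c q : ℝ} (hc : 0 < c) (ht : 0 < t) (hs : 0 < s)
    (hq : t < s → c * s ≤ q) :
    0 ≤ (c * twoPiece t s - q) * (s / (c * twoPiece t s) ^ 2 - (c ^ 2 * t)⁻¹) := by
  rcases le_or_gt s t with hst | hts
  · have hsq : (c * twoPiece t s) ^ 2 = c ^ 2 * t * s := by
      rw [twoPiece_of_le hs.le hst, mul_pow, mul_pow, sq_sqrt ht.le, sq_sqrt hs.le, mul_assoc]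
    rw [hsq, div_mul_cancel_right₀ hs.ne', sub_self, mul_zero]
  · rw [twoPiece_of_ge hs.le hts.le]
    refine mul_nonneg_of_nonpos_of_nonpos (sub_nonpos.2 (hq hts)) (sub_nonpos.2 ?_)
    rw [show s / (c * s) ^ 2 = (c ^ 2 * s)⁻¹ by field_simp]
    gcongr

end twoPiece

theorem div_le_div_add_mul_sub {h p p₀ κ : ℝ} (hh : 0 ≤ h) (hp : 0 < p) (hp₀ : 0 < p₀)
    (hfo : 0 ≤ (p - p₀) * (h / p ^ 2 - κ)) : h / p ≤ h / p₀ + κ * (p₀ - p) := by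
  have htangent : h / p ≤ h / p₀ + (p₀ - p) * (h / p ^ 2) := by
    have hgap : h / p₀ + (p₀ - p) * (h / p ^ 2) - h / p = h * (p - p₀) ^ 2 / (p₀ * p ^ 2) := by
      field_simp
      ring
    have : 0 ≤ h * (p - p₀) ^ 2 / (p₀ * p ^ 2) := by positivity
    linarith
  nlinarith

theorem integral_div_le_integral_div_of_first_order {a b κ : ℝ} (hab : a ≤ b) {h p p₀ : ℝ → ℝ}
    (hh : ∀ x ∈ Icc a b, 0 ≤ h x) (hp : ∀ x ∈ Icc a b, 0 < p x) (hp₀ : ∀ x ∈ Icc a b, 0 < p₀ x)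
    (hpi : IntervalIntegrable p volume a b) (hp₀i : IntervalIntegrable p₀ volume a b)
    (hhp : IntervalIntegrable (fun x => h x / p x) volume a b)
    (hhp₀ : IntervalIntegrable (fun x => h x / p₀ x) volume a b)
    (hmass : ∫ x in a..b, p x = ∫ x in a..b, p₀ x)
    (hfo : ∀ x ∈ Icc a b, 0 ≤ (p x - p₀ x) * (h x / p x ^ 2 - κ)) :
    ∫ x in a..b, h x / p x ≤ ∫ x in a..b, h x / p₀ x :=
  calc ∫ x in a..b, h x / p x ≤ ∫ x in a..b, (h x / p₀ x + κ * (p₀ x - p x)) :=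
        intervalIntegral.integral_mono_on hab hhp (hhp₀.add ((hp₀i.sub hpi).const_mul κ))
          fun x hx => div_le_div_add_mul_sub (hh x hx) (hp x hx) (hp₀ x hx) (hfo x hx)
    _ = ∫ x in a..b, h x / p₀ x := by
        rw [intervalIntegral.integral_add hhp₀ ((hp₀i.sub hpi).const_mul κ),
          intervalIntegral.integral_const_mul, intervalIntegral.integral_sub hp₀i hpi, hmass,
          sub_self, mul_zero, add_zero]

theorem continuous_integral_twoPiece {a b : ℝ} (hab : a ≤ b) {h : ℝ → ℝ}
    (hh : ContinuousOn h (Icc a b)) :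
    Continuous fun t => ∫ x in a..b, twoPiece t (h x) := by
  -- `h ∘ projIcc` is globally continuous and has the same integrals as `h`.
  set g : ℝ → ℝ := fun x => h (projIcc a b hab x)
  have hg : Continuous g :=
    hh.comp_continuous (continuous_subtype_val.comp continuous_projIcc) fun x =>
      (projIcc a b hab x).2
  have hgh : ∀ t, ∫ x in a..b, twoPiece t (h x) = ∫ x in a..b, twoPiece t (g x) := fun t =>
    intervalIntegral.integral_congr fun x hx => by
      rw [uIcc_of_le hab] at hx
      simp only [g, projIcc_of_mem hab hx]
  simp_rw [hgh]
  exact intervalIntegral.continuous_parametric_intervalIntegral_of_continuous'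
    (by unfold twoPiece; fun_prop) a b

theorem exists_mem_Icc_le_and_eq_of_lt {F : ℝ → ℝ} {lo hi M : ℝ} (hle : lo ≤ hi)
    (hF : ContinuousOn F (Icc lo hi)) (hlo : F lo ≤ M) :
    ∃ t ∈ Icc lo hi, F t ≤ M ∧ (t < hi → F t = M) := by
  by_cases hhi : F hi ≤ M
  · exact ⟨hi, right_mem_Icc.2 hle, hhi, fun h => (lt_irrefl hi h).elim⟩
  · obtain ⟨t, ht, hFt⟩ := intermediate_value_Icc hle hF ⟨hlo, (not_le.1 hhi).le⟩
    exact ⟨t, ht, hFt.le, fun _ => hFt⟩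

theorem exists_threshold {a b lo hi M : ℝ} {h : ℝ → ℝ} (hab : a ≤ b)
    (hcont : ContinuousOn h (Icc a b)) (hlo : 0 ≤ lo)
    (hbounds : ∀ x ∈ Icc a b, h x ∈ Icc lo hi) (hM : ∫ x in a..b, h x ≤ M) :
    ∃ t ∈ Icc lo hi, (∫ x in a..b, twoPiece t (h x)) ≤ M ∧
      (t < hi → ∫ x in a..b, twoPiece t (h x) = M) := by
  obtain ⟨hlo_a, ha_hi⟩ := hbounds a (left_mem_Icc.2 hab)
  have hFlo : ∫ x in a..b, twoPiece lo (h x) = ∫ x in a..b, h x :=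
    intervalIntegral.integral_congr fun x hx => by
      rw [uIcc_of_le hab] at hx
      exact twoPiece_of_ge (hlo.trans (hbounds x hx).1) (hbounds x hx).1
  exact exists_mem_Icc_le_and_eq_of_lt (hlo_a.trans ha_hi)
    (continuous_integral_twoPiece hab hcont).continuousOn (hFlo.trans_le hM)

theorem exists_twoPiece_density {a b lo hi M : ℝ} (hab : a < b) {h p₀ : ℝ → ℝ}
    (hcont : ContinuousOn h (Icc a b)) (hlo : 0 < lo) (hbounds : ∀ x ∈ Icc a b, h x ∈ Icc lo hi)
    (hp₀ : ∀ x ∈ Icc a b, 0 < p₀ x) (hp₀1 : ∫ x in a..b, p₀ x = 1)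
    (hhp₀ : IntervalIntegrable (fun x => h x / p₀ x) volume a b)
    (hM : ∀ x ∈ Icc a b, h x ≤ M * p₀ x) :
    ∃ t ∈ Icc lo hi, ∃ c > 0, (∫ x in a..b, c * twoPiece t (h x) = 1) ∧
      (∀ x ∈ Icc a b, h x / (c * twoPiece t (h x)) ≤ M) ∧
      ∫ x in a..b, h x / (c * twoPiece t (h x)) ≤ ∫ x in a..b, h x / p₀ x := by
  have hpos : ∀ x ∈ Icc a b, 0 < h x := fun x hx => hlo.trans_le (hbounds x hx).1
  have hp₀i : IntervalIntegrable p₀ volume a b :=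
    intervalIntegral.intervalIntegrable_of_integral_ne_zero (hp₀1 ▸ one_ne_zero)
  have hhi : IntervalIntegrable h volume a b := hcont.intervalIntegrable_of_Icc hab.le
  have hIh : ∫ x in a..b, h x ≤ M :=
    calc ∫ x in a..b, h x ≤ ∫ x in a..b, M * p₀ x :=
          intervalIntegral.integral_mono_on hab.le hhi (hp₀i.const_mul M) hM
      _ = M := by rw [intervalIntegral.integral_const_mul, hp₀1, mul_one]
  obtain ⟨t, ht, hFM, hFeq⟩ := exists_threshold hab.le hcont hlo.le hbounds hIh
  set F := ∫ x in a..b, twoPiece t (h x)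
  have hqc : ContinuousOn (fun x => twoPiece t (h x)) (Icc a b) :=
    ((continuous_const.mul continuous_sqrt).max continuous_id).comp_continuousOn hcont
  have hqi : IntervalIntegrable (fun x => twoPiece t (h x)) volume a b :=
    hqc.intervalIntegrable_of_Icc hab.le
  have hIh_pos : 0 < ∫ x in a..b, h x :=
    intervalIntegral.intervalIntegral_pos_of_pos_on hhi
      (fun x hx => hpos x (Ioo_subset_Icc_self hx)) hab
  have hFpos : 0 < F :=
    hIh_pos.trans_le (intervalIntegral.integral_mono_on hab.le hhi hqi fun x _ => le_twoPiece)
  set c := F⁻¹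
  have hc : 0 < c := inv_pos.2 hFpos
  have hp : ∀ x ∈ Icc a b, 0 < c * twoPiece t (h x) := fun x hx =>
    mul_pos hc ((hpos x hx).trans_le le_twoPiece)
  have hmass : ∫ x in a..b, c * twoPiece t (h x) = 1 := by
    rw [intervalIntegral.integral_const_mul, inv_mul_cancel₀ hFpos.ne']
  refine ⟨t, ht, c, hc, hmass, fun x hx => ?_, ?_⟩
  · exact (div_mul_twoPiece_le_inv hc (hpos x hx)).trans ((inv_inv F).trans_le hFM)
  · refine integral_div_le_integral_div_of_first_order (κ := (c ^ 2 * t)⁻¹) hab.le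
      (fun x hx => (hpos x hx).le) hp hp₀ (hqi.const_mul c) hp₀i
      ((hcont.div (continuousOn_const.mul hqc) fun x hx =>
        (hp x hx).ne').intervalIntegrable_of_Icc hab.le) hhp₀ (hmass.trans hp₀1.symm) fun x hx => ?_
    refine twoPiece_first_order hc (hlo.trans_le ht.1) (hpos x hx) fun htx => ?_
    have hFM : F = M := hFeq (htx.trans_le (hbounds x hx).2)
    calc c * h x = h x / M := by rw [← hFM, inv_mul_eq_div]
      _ ≤ p₀ x :=
          div_le_of_le_mul₀ (hFM ▸ hFpos.le) (hp₀ x hx).le ((hM x hx).trans_eq (mul_comm _ _))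

theorem stmt_19_general (h : ℝ → ℝ) (hcont : ContinuousOn h (Icc (-1) 1))
    (hpos : ∀ x ∈ Icc (-1 : ℝ) 1, 0 < h x)
    (σ2 : ℝ) (hσ2 : 0 ≤ σ2)
    (p0 : ℝ → ℝ)
    (hp0pos : ∀ x ∈ Icc (-1 : ℝ) 1, 0 < p0 x)
    (hp0dens : ∫ x in (-1 : ℝ)..1, p0 x = 1)
    (hint : IntervalIntegrable (fun x => h x / p0 x) volume (-1) 1)
    (hbdd : BddAbove ((fun x => h x / p0 x) '' Icc (-1) 1)) :
    let R : (ℝ → ℝ) → ℝ := fun p =>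
      (σ2 / 2) * (∫ x in (-1 : ℝ)..1, h x / p x)
        + sSup ((fun x => h x / p x) '' Icc (-1) 1)
    ∃ h0 ∈ Icc (sInf (h '' Icc (-1) 1)) (sSup (h '' Icc (-1) 1)), ∃ c > (0 : ℝ),
      let pstar : ℝ → ℝ := fun x =>
        if h x ≤ h0 then c * Real.sqrt h0 * Real.sqrt (h x) else c * h x
      (∫ x in (-1 : ℝ)..1, pstar x = 1) ∧ R pstar ≤ R p0 := by
  intro R
  have hI : (Icc (-1 : ℝ) 1).Nonempty := nonempty_Icc.2 (by norm_num)
  have hK : IsCompact (h '' Icc (-1) 1) := isCompact_Icc.image_of_continuousOn hcont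
  have hbounds :
      ∀ x ∈ Icc (-1 : ℝ) 1, h x ∈ Icc (sInf (h '' Icc (-1) 1)) (sSup (h '' Icc (-1) 1)) :=
    fun x hx => ⟨csInf_le hK.bddBelow (mem_image_of_mem h hx),
      le_csSup hK.bddAbove (mem_image_of_mem h hx)⟩
  have hinf : 0 < sInf (h '' Icc (-1) 1) := by
    obtain ⟨x, hx, hxinf⟩ := hK.sInf_mem (hI.image h)
    exact hxinf ▸ hpos x hx
  have hM : ∀ x ∈ Icc (-1 : ℝ) 1, h x ≤ sSup ((fun x => h x / p0 x) '' Icc (-1) 1) * p0 x :=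
    fun x hx => (div_le_iff₀ (hp0pos x hx)).1 (le_csSup hbdd (mem_image_of_mem _ hx))
  obtain ⟨h0, hh0, c, hc, hmass, hsup, hinteg⟩ :=
    exists_twoPiece_density (by norm_num) hcont hinf hbounds hp0pos hp0dens hint hM
  refine ⟨h0, hh0, c, hc, ?_⟩
  intro pstar
  have h11 : uIcc (-1 : ℝ) 1 = Icc (-1) 1 := uIcc_of_le (by norm_num)
  have hpstar : EqOn pstar (fun x => c * twoPiece h0 (h x)) (Icc (-1) 1) := fun x hx =>
    (mul_twoPiece_eq_ite c (hpos x hx).le).symm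
  have hratio : EqOn (fun x => h x / pstar x) (fun x => h x / (c * twoPiece h0 (h x)))
      (Icc (-1) 1) := fun x hx => congrArg (h x / ·) (hpstar hx)
  refine ⟨(intervalIntegral.integral_congr (h11 ▸ hpstar)).trans hmass,
    add_le_add (mul_le_mul_of_nonneg_left ?_ (by positivity)) ?_⟩
  · rw [intervalIntegral.integral_congr (h11 ▸ hratio)]
    exact hinteg
  · rw [hratio.image_eq]
    exact csSup_le (hI.image _) (forall_mem_image.2 hsup)

/-- for every density `p₀ > 0` on `[-1,1]` there exists a two-piece
density `p₀*` — `p₀*(x) = c √(h₀) √(h(x))` on `A_{h₀} = {h ≤ h₀}` and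
`p₀*(x) = c h(x)` on `B_{h₀} = {h > h₀}`, for some `h₀ ∈ [h_min, h_max]` and
normalizing constant `c` — with `R_{p₀*} ≤ R_{p₀}`, where
`R_p = (σ²/2) ∫ h/p + sup_{x∈[-1,1]} h(x)/p(x)`. -/
theorem stmt_19 (h : ℝ → ℝ) (hcont : ContinuousOn h (Icc (-1) 1))
    (hpos : ∀ x ∈ Icc (-1 : ℝ) 1, 0 < h x)
    (σ2 : ℝ) (hσ2 : 0 ≤ σ2)
    (p0 : ℝ → ℝ) (hmeas : Measurable p0)
    (hp0pos : ∀ x ∈ Icc (-1 : ℝ) 1, 0 < p0 x)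
    (hp0dens : ∫ x in (-1 : ℝ)..1, p0 x = 1)
    (hint : IntervalIntegrable (fun x => h x / p0 x) volume (-1) 1)
    (hbdd : BddAbove ((fun x => h x / p0 x) '' Icc (-1) 1)) :
    let R : (ℝ → ℝ) → ℝ := fun p =>
      (σ2 / 2) * (∫ x in (-1 : ℝ)..1, h x / p x)
        + sSup ((fun x => h x / p x) '' Icc (-1) 1)
    ∃ h0 ∈ Icc (sInf (h '' Icc (-1) 1)) (sSup (h '' Icc (-1) 1)), ∃ c > (0 : ℝ),
      let pstar : ℝ → ℝ := fun x =>
        if h x ≤ h0 then c * Real.sqrt h0 * Real.sqrt (h x) else c * h x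
      (∫ x in (-1 : ℝ)..1, pstar x = 1) ∧ R pstar ≤ R p0 :=
  stmt_19_general h hcont hpos σ2 hσ2 p0 hp0pos hp0dens hint hbdd
end
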